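/- arXiv:1502.05558 — 2 statements merged into one kernel-verified Lean document; each statement's English description precedes it below -/
import Mathlib

section
/- Bisimilarity Lemma: Let 𝒯=(T,σ,τ) be a tile assembly system on a space graph G=(V,E). There exists a map f from sets of glue movies to sets of restricted assembly sequences such that for every cut-set X ⊆ E separating G into two connected components Y and Z with dom σ ⊆ Y, the policy set 𝒫(𝒯,Z) equals f(𝒟(𝒯,X)). In other words, the policy set of a tile assembly system in a zone Z containing no tile of the seed depends only on the diplomatic set on the border of Z. -/
namespace ATAM

/-- The four planar directions (north, east, south, west). -/
inductive Dir : Type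
  | N | E | S | W
  deriving DecidableEq, Repr

instance : Fintype Dir :=
  ⟨⟨{Dir.N, Dir.E, Dir.S, Dir.W}, by decide⟩, by intro x; cases x <;> decide⟩

/-- A space graph: a regular graph in which every vertex has exactly one
incident edge in each direction, together with a coherent notion of
opposite directions. -/
structure SpaceGraph (D V : Type) where
  opp : D → D
  nbr : D → V → V
  opp_opp : ∀ d, opp (opp d) = d
  nbr_opp : ∀ d v, nbr (opp d) (nbr d v) = v

/-- A glue: a label together with a nonnegative integer strength.
A glue of strength `0` plays the role of the null glue. -/
abbrev Glue := ℕ × ℕ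

/-- The null glue. -/
def nullGlue : Glue := (0, 0)

/-- A tile type assigns a glue to each of its sides; tile types can be
neither rotated nor flipped. -/
abbrev Tile (D : Type) := D → Glue

/-- An assembly: a partial placement of tile types on the vertices. -/
abbrev Assembly (D V : Type) := V → Option (Tile D)

/-- The domain of an assembly. -/
def Assembly.dom {D V : Type} (α : Assembly D V) : Set V := {v | α v ≠ none}

section Core

variable {D V : Type} [Fintype D] [DecidableEq D] [DecidableEq V]

/-- Strength of the bond between the tile at `v` and the tile at its
`d`-neighbour: the two tiles interact iff the glues on their abutting
sides are equal and of positive strength. -/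
def bondStrength (G : SpaceGraph D V) (α : Assembly D V) (v : V) (d : D) : ℕ :=
  match α v, α (G.nbr d v) with
  | some t, some t' => if t d = t' (G.opp d) ∧ 0 < (t d).2 then (t d).2 else 0
  | _, _ => 0

/-- Strength with which tile `t`, placed at `z`, would bind along side `d`. -/
def sideStrength (G : SpaceGraph D V) (α : Assembly D V) (t : Tile D) (z : V) (d : D) : ℕ :=
  match α (G.nbr d z) with
  | some t' => if t d = t' (G.opp d) ∧ 0 < (t d).2 then (t d).2 else 0
  | none => 0

/-- Total binding strength of tile `t` at position `z`. -/
def attachStrength (G : SpaceGraph D V) (α : Assembly D V) (t : Tile D) (z : V) : ℕ :=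
  ∑ d : D, sideStrength G α t z d

/-- τ-stability: every cut of the binding graph has weight at least τ. -/
def StableAt (G : SpaceGraph D V) (τ : ℕ) (α : Assembly D V) : Prop :=
  ∀ A : Set V, (A ∩ α.dom).Nonempty → (α.dom \ A).Nonempty →
    ∃ B : Finset (V × D),
      (∀ p ∈ B, p.1 ∈ A ∩ α.dom ∧ G.nbr p.2 p.1 ∈ α.dom \ A) ∧
      τ ≤ ∑ p ∈ B, bondStrength G α p.1 p.2

end Core

/-- A tile assembly system: a finite tileset, a seed assembly and a temperature. -/
structure TAS (D V : Type) [Fintype D] [DecidableEq D] where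
  tiles : Finset (Tile D)
  seed : Assembly D V
  temp : ℕ

section Dynamics

variable {D V : Type} [Fintype D] [DecidableEq D] [DecidableEq V]

/-- The tile `t` (from the tileset) can attach to `α` at the empty position `z`
with total matching glue strength at least the temperature. -/
def CanAttach (G : SpaceGraph D V) (𝒯 : TAS D V) (α : Assembly D V) (t : Tile D) (z : V) : Prop :=
  t ∈ 𝒯.tiles ∧ α z = none ∧ 𝒯.temp ≤ attachStrength G α t z

/-- The assembly obtained by placing tile `t` at position `z`. -/
def attach (α : Assembly D V) (t : Tile D) (z : V) : Assembly D V :=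
  Function.update α z (some t)

/-- `IsSeqFrom G 𝒯 α l`: `l` is a valid sequence of single-tile attachments
starting from the assembly `α` in the system `𝒯`. -/
def IsSeqFrom (G : SpaceGraph D V) (𝒯 : TAS D V) : Assembly D V → List (Tile D × V) → Prop
  | _, [] => True
  | α, a :: l => CanAttach G 𝒯 α a.1 a.2 ∧ IsSeqFrom G 𝒯 (attach α a.1 a.2) l

/-- Result of performing a sequence of attachments. -/
def resultOf : Assembly D V → List (Tile D × V) → Assembly D V
  | α, [] => α
  | α, a :: l => resultOf (attach α a.1 a.2) l

/-- One (possibly stuttering) step of assembly. -/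
def Extends1 (G : SpaceGraph D V) (𝒯 : TAS D V) (α β : Assembly D V) : Prop :=
  β = α ∨ ∃ t z, CanAttach G 𝒯 α t z ∧ β = attach α t z

/-- `β` is producible from `α` in `𝒯`: it is the (possibly infinite) limit of a
chain of single-tile attachments starting from `α`. -/
def ProducibleFrom (G : SpaceGraph D V) (𝒯 : TAS D V) (α β : Assembly D V) : Prop :=
  ∃ f : ℕ → Assembly D V, f 0 = α ∧ (∀ n, Extends1 G 𝒯 (f n) (f (n + 1))) ∧
    ∀ v t, β v = some t ↔ ∃ n, f n v = some t

/-- The set of productions of `𝒯`. -/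
def Producible (G : SpaceGraph D V) (𝒯 : TAS D V) (β : Assembly D V) : Prop :=
  ProducibleFrom G 𝒯 𝒯.seed β

/-- Terminal productions. -/
def Terminal (G : SpaceGraph D V) (𝒯 : TAS D V) (β : Assembly D V) : Prop :=
  Producible G 𝒯 β ∧ ∀ t z, ¬ CanAttach G 𝒯 β t z

/-- Well-formedness of a TAS: positive temperature, finite seed whose tiles
come from the tileset, and τ-stable seed. -/
def WellFormed (G : SpaceGraph D V) (𝒯 : TAS D V) : Prop :=
  1 ≤ 𝒯.temp ∧ 𝒯.seed.dom.Finite ∧ (∀ v t, 𝒯.seed v = some t → t ∈ 𝒯.tiles) ∧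
    StableAt G 𝒯.temp 𝒯.seed

/-- Two adjacent tiles of `α` do not match: at least one of them has a glue of
strictly positive strength on their common side, and the glues there differ. -/
def HasMismatch (G : SpaceGraph D V) (α : Assembly D V) : Prop :=
  ∃ v d t t', α v = some t ∧ α (G.nbr d v) = some t' ∧
    t d ≠ t' (G.opp d) ∧ (0 < (t d).2 ∨ 0 < (t' (G.opp d)).2)

/-- A mismatch-free system: no producible assembly contains a mismatch. -/
def MismatchFree (G : SpaceGraph D V) (𝒯 : TAS D V) : Prop :=
  ∀ α, Producible G 𝒯 α → ¬ HasMismatch G α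

/-- A locally consistent system: mismatch-free, and every tile always attaches
with the sum of matching glue strengths exactly equal to the temperature. -/
def LocallyConsistent (G : SpaceGraph D V) (𝒯 : TAS D V) : Prop :=
  MismatchFree G 𝒯 ∧
    ∀ α t z, Producible G 𝒯 α → CanAttach G 𝒯 α t z →
      attachStrength G α t z = 𝒯.temp

end Dynamics

end ATAM

namespace ATAM

/-- Classical `decide`. -/
noncomputable def cdecide (P : Prop) : Bool := @decide P (Classical.propDecidable P)

/-- A glue addition: an (undirected) edge, an orientation, and a glue. -/
abbrev GlueAdd (V : Type) := Sym2 V × Bool × Glue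

section Movies

variable {V : Type} [DecidableEq V]

/-- The glue additions induced on the edge set `F` by the attachment of tile `t`
at position `z` onto `α`: one glue addition for each side of `t` (in clockwise
order starting from the north) whose edge lies in `F` and on which `t` matches
an already present neighbouring tile; the orientation is `+` (here `true`)
exactly for the south and west sides of the new tile. -/
noncomputable def attachMovie (G : SpaceGraph Dir V) (F : Set (Sym2 V))
    (α : Assembly Dir V) (t : Tile Dir) (z : V) : List (GlueAdd V) :=
  (([Dir.N, Dir.E, Dir.S, Dir.W].filter fun d =>
      cdecide (s(z, G.nbr d z) ∈ F ∧
        ∃ t', α (G.nbr d z) = some t' ∧ t d = t' (G.opp d) ∧ 0 < (t d).2)).map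
    fun d => (s(z, G.nbr d z), decide (d = Dir.S ∨ d = Dir.W), t d))

/-- The glue movie on `F` induced by an attachment sequence starting at `α`. -/
noncomputable def movieOf (G : SpaceGraph Dir V) (F : Set (Sym2 V)) :
    Assembly Dir V → List (Tile Dir × V) → List (GlueAdd V)
  | _, [] => []
  | α, a :: l => attachMovie G F α a.1 a.2 ++ movieOf G F (attach α a.1 a.2) l

/-- Restriction of an attachment sequence to the positions of `Z`. -/
noncomputable def restrictSeq (Z : Set V) (l : List (Tile Dir × V)) : List (Tile Dir × V) :=
  l.filter fun a => cdecide (a.2 ∈ Z)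

/-- The policy set of `𝒯` on `Z`: restrictions to `Z` of all assembly
sequences of `𝒯` (including the non-maximal ones). -/
noncomputable def PolicySet (G : SpaceGraph Dir V) (𝒯 : TAS Dir V) (Z : Set V) :
    Set (List (Tile Dir × V)) :=
  {p | ∃ l, IsSeqFrom G 𝒯 𝒯.seed l ∧ p = restrictSeq Z l}

/-- The diplomatic set of `𝒯` along `F`: glue movies on `F` induced by all
assembly sequences of `𝒯`. -/
noncomputable def DiploSet (G : SpaceGraph Dir V) (𝒯 : TAS Dir V) (F : Set (Sym2 V)) :
    Set (List (GlueAdd V)) :=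
  {m | ∃ l, IsSeqFrom G 𝒯 𝒯.seed l ∧ m = movieOf G F 𝒯.seed l}

/-- `S` is connected within the space graph `G`. -/
def ConnectedWithin (G : SpaceGraph Dir V) (S : Set V) : Prop :=
  ∀ u ∈ S, ∀ v ∈ S,
    Relation.ReflTransGen (fun a b => a ∈ S ∧ b ∈ S ∧ ∃ d, G.nbr d a = b) u v

/-- `X` is a cut-set separating `G` into the two connected components `Y` and `Z`. -/
def IsCutSet (G : SpaceGraph Dir V) (X : Set (Sym2 V)) (Y Z : Set V) : Prop :=
  Y ∪ Z = Set.univ ∧ Disjoint Y Z ∧ Y.Nonempty ∧ Z.Nonempty ∧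
    ConnectedWithin G Y ∧ ConnectedWithin G Z ∧
    X = {e | ∃ v d, v ∈ Y ∧ G.nbr d v ∈ Z ∧ e = s(v, G.nbr d v)}

end Movies

end ATAM

/-! A tile attaches only by binding, with a glue of positive strength, to a tile that is already
present. When such a bond crosses the border of a cut, it is recorded in the glue movie on that
cut. So two cuts with the same diplomatic set agree on which of the bonds formed by assembly
sequences cross their borders, and following any assembly sequence tile by tile from the seed, each tile lies on the policy side
of one cut iff it lies on the policy side of the other. Hence the cuts have the same policy set,
and `f` can send a diplomatic set to the union of the policy sets of all cuts producing it. -/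

namespace ATAM

section Assembly

variable {D V : Type} {G : SpaceGraph D V}

lemma sideStrength_pos_iff {α : Assembly D V} {t : Tile D} {z : V} {d : D} :
    0 < sideStrength G α t z d ↔
      ∃ t', α (G.nbr d z) = some t' ∧ t d = t' (G.opp d) ∧ 0 < (t d).2 := by
  rcases hα : α (G.nbr d z) with _ | t'
  · simp [sideStrength, hα]
  · simp only [sideStrength, hα, Option.some.injEq, exists_eq_left']
    split_ifs with h
    · exact iff_of_true h.2 h
    · exact iff_of_false (lt_irrefl 0) h

lemma mem_dom_or_exists_of_resultOf_ne_none [DecidableEq V] {α : Assembly D V}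
    {l : List (Tile D × V)} {w : V} (h : resultOf α l w ≠ none) :
    w ∈ α.dom ∨ ∃ a ∈ l, a.2 = w := by
  induction l generalizing α with
  | nil => exact Or.inl h
  | cons a l ih =>
    rcases ih h with h' | ⟨b, hb, rfl⟩
    · by_cases hw : w = a.2
      · exact Or.inr ⟨a, List.mem_cons_self, hw.symm⟩
      · exact Or.inl (by simpa [Assembly.dom, attach, Function.update_of_ne hw] using h')
    · exact Or.inr ⟨b, List.mem_cons_of_mem _ hb, rfl⟩

variable [Fintype D] [DecidableEq D] {𝒯 : TAS D V}

lemma CanAttach.exists_sideStrength_pos {α : Assembly D V} {t : Tile D} {z : V}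
    (h : CanAttach G 𝒯 α t z) (htemp : 1 ≤ 𝒯.temp) : ∃ d, 0 < sideStrength G α t z d := by
  have hpos : attachStrength G α t z ≠ 0 := by have := h.2.2; omega
  obtain ⟨d, -, hd⟩ := Finset.exists_ne_zero_of_sum_ne_zero hpos
  exact ⟨d, Nat.pos_of_ne_zero hd⟩

lemma isSeqFrom_append [DecidableEq V] {α : Assembly D V} {l₁ l₂ : List (Tile D × V)} :
    IsSeqFrom G 𝒯 α (l₁ ++ l₂) ↔
      IsSeqFrom G 𝒯 α l₁ ∧ IsSeqFrom G 𝒯 (resultOf α l₁) l₂ := by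
  induction l₁ generalizing α with
  | nil => simp [IsSeqFrom, resultOf]
  | cons a l ih => simp [IsSeqFrom, resultOf, ih, and_assoc]

end Assembly

section Movies

variable {V : Type} {G : SpaceGraph Dir V}

lemma cdecide_eq_true_iff {P : Prop} : cdecide P = true ↔ P := by
  simp [cdecide]

lemma movieOf_append [DecidableEq V] (F : Set (Sym2 V)) (α : Assembly Dir V)
    (l₁ l₂ : List (Tile Dir × V)) :
    movieOf G F α (l₁ ++ l₂) = movieOf G F α l₁ ++ movieOf G F (resultOf α l₁) l₂ := by
  induction l₁ generalizing α with
  | nil => simp [movieOf, resultOf]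
  | cons a l ih => simp [movieOf, resultOf, ih]

lemma fst_mem_of_mem_movieOf [DecidableEq V] {F : Set (Sym2 V)} {α : Assembly Dir V}
    {l : List (Tile Dir × V)} {x : GlueAdd V} (hx : x ∈ movieOf G F α l) : x.1 ∈ F := by
  induction l generalizing α with
  | nil => simp [movieOf] at hx
  | cons a l ih =>
    rcases List.mem_append.mp hx with hx | hx
    · obtain ⟨d, hd, rfl⟩ := List.mem_map.mp hx
      exact (cdecide_eq_true_iff.mp (List.mem_filter.mp hd).2).1
    · exact ih hx

lemma exists_mem_attachMovie {F : Set (Sym2 V)} {α : Assembly Dir V} {t : Tile Dir} {z : V}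
    {d : Dir} (hF : s(z, G.nbr d z) ∈ F) (hd : 0 < sideStrength G α t z d) :
    ∃ x ∈ attachMovie G F α t z, x.1 = s(z, G.nbr d z) := by
  refine ⟨_, List.mem_map.mpr ⟨d, List.mem_filter.mpr ⟨by cases d <;> simp, ?_⟩, rfl⟩, rfl⟩
  exact cdecide_eq_true_iff.mpr ⟨hF, sideStrength_pos_iff.mp hd⟩

end Movies

section Cuts

variable {V : Type} {G : SpaceGraph Dir V} {X : Set (Sym2 V)} {Y Z : Set V}

lemma IsCutSet.mem_left_iff (h : IsCutSet G X Y Z) {v : V} : v ∈ Y ↔ v ∉ Z := by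
  obtain ⟨hun, hdisj, -⟩ := h
  refine ⟨fun hY hZ => Set.disjoint_left.mp hdisj hY hZ, fun hZ => ?_⟩
  have hv : v ∈ Y ∪ Z := hun ▸ Set.mem_univ v
  exact hv.resolve_right hZ

lemma IsCutSet.edge_mem_iff (h : IsCutSet G X Y Z) (v : V) (d : Dir) :
    s(v, G.nbr d v) ∈ X ↔ ¬(v ∈ Z ↔ G.nbr d v ∈ Z) := by
  rw [h.2.2.2.2.2.2]
  constructor
  · rintro ⟨u, d', hu, hu', he⟩
    rw [h.mem_left_iff] at hu
    rcases Sym2.eq_iff.mp he with ⟨rfl, hw⟩ | ⟨rfl, hw⟩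
    · rw [hw]; tauto
    · rw [hw]; tauto
  · intro hne
    by_cases hv : v ∈ Z
    · refine ⟨G.nbr d v, G.opp d, h.mem_left_iff.mpr (by tauto), ?_, ?_⟩
      · rwa [G.nbr_opp]
      · rw [G.nbr_opp, Sym2.eq_swap]
    · exact ⟨v, d, h.mem_left_iff.mpr hv, by tauto, rfl⟩

end Cuts

section Bisimilarity

variable {V : Type} [DecidableEq V] {G : SpaceGraph Dir V} {𝒯 : TAS Dir V}
  {X X' : Set (Sym2 V)} {Y Z Y' Z' : Set V}

lemma edge_mem_of_diploSet_eq (hD : DiploSet G 𝒯 X = DiploSet G 𝒯 X')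
    {l : List (Tile Dir × V)} {t : Tile Dir} {v : V} {d : Dir}
    (hl : IsSeqFrom G 𝒯 𝒯.seed (l ++ [(t, v)]))
    (hd : 0 < sideStrength G (resultOf 𝒯.seed l) t v d) (hX : s(v, G.nbr d v) ∈ X) :
    s(v, G.nbr d v) ∈ X' := by
  obtain ⟨x, hx, hxe⟩ := exists_mem_attachMovie hX hd
  have hmovie : x ∈ movieOf G X 𝒯.seed (l ++ [(t, v)]) := by
    simp [movieOf_append, movieOf, hx]
  obtain ⟨l', -, hl'⟩ : movieOf G X 𝒯.seed (l ++ [(t, v)]) ∈ DiploSet G 𝒯 X' :=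
    hD ▸ ⟨_, hl, rfl⟩
  exact hxe ▸ fst_mem_of_mem_movieOf (hl' ▸ hmovie)

lemma mem_iff_of_attach (h : IsCutSet G X Y Z) (h' : IsCutSet G X' Y' Z')
    (hD : DiploSet G 𝒯 X = DiploSet G 𝒯 X') {l : List (Tile Dir × V)} {t : Tile Dir} {v : V}
    {d : Dir} (hl : IsSeqFrom G 𝒯 𝒯.seed (l ++ [(t, v)]))
    (hd : 0 < sideStrength G (resultOf 𝒯.seed l) t v d)
    (hw : G.nbr d v ∈ Z ↔ G.nbr d v ∈ Z') : v ∈ Z ↔ v ∈ Z' := by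
  have hX : s(v, G.nbr d v) ∈ X ↔ s(v, G.nbr d v) ∈ X' :=
    ⟨edge_mem_of_diploSet_eq hD hl hd, edge_mem_of_diploSet_eq hD.symm hl hd⟩
  rw [h.edge_mem_iff, h'.edge_mem_iff] at hX
  tauto

lemma mem_iff_of_diploSet_eq (h : IsCutSet G X Y Z) (h' : IsCutSet G X' Y' Z')
    (hs : 𝒯.seed.dom ⊆ Y) (hs' : 𝒯.seed.dom ⊆ Y') (hD : DiploSet G 𝒯 X = DiploSet G 𝒯 X')
    (htemp : 1 ≤ 𝒯.temp) (l : List (Tile Dir × V)) (hl : IsSeqFrom G 𝒯 𝒯.seed l) :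
    ∀ a ∈ l, a.2 ∈ Z ↔ a.2 ∈ Z' := by
  induction l using List.reverseRecOn with
  | nil => simp
  | append_singleton l a ih =>
    obtain ⟨hl₁, hatt, -⟩ := isSeqFrom_append.mp hl
    have ih := ih hl₁
    intro b hb
    rcases List.mem_append.mp hb with hb | hb
    · exact ih b hb
    · obtain rfl := List.mem_singleton.mp hb
      obtain ⟨d, hd⟩ := hatt.exists_sideStrength_pos htemp
      obtain ⟨t', hw, -⟩ := sideStrength_pos_iff.mp hd
      refine mem_iff_of_attach h h' hD hl hd ?_
      rcases mem_dom_or_exists_of_resultOf_ne_none (hw ▸ Option.some_ne_none t') with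
        hseed | ⟨c, hc, hcw⟩
      · exact iff_of_false (h.mem_left_iff.mp (hs hseed)) (h'.mem_left_iff.mp (hs' hseed))
      · exact hcw ▸ ih c hc

lemma policySet_eq_of_diploSet_eq (h : IsCutSet G X Y Z) (h' : IsCutSet G X' Y' Z')
    (hs : 𝒯.seed.dom ⊆ Y) (hs' : 𝒯.seed.dom ⊆ Y') (hD : DiploSet G 𝒯 X = DiploSet G 𝒯 X')
    (htemp : 1 ≤ 𝒯.temp) : PolicySet G 𝒯 Z = PolicySet G 𝒯 Z' := by
  have hrestrict : ∀ l, IsSeqFrom G 𝒯 𝒯.seed l → restrictSeq Z l = restrictSeq Z' l :=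
    fun l hl => List.filter_congr fun a ha => by
      unfold cdecide
      exact decide_eq_decide.mpr (mem_iff_of_diploSet_eq h h' hs hs' hD htemp l hl a ha)
  ext p
  exact exists_congr fun l => and_congr_right fun hl => by rw [hrestrict l hl]

end Bisimilarity

theorem bisimilarity_lemma {V : Type} [DecidableEq V]
    (G : SpaceGraph Dir V) (𝒯 : TAS Dir V) (hWF : WellFormed G 𝒯) :
    ∃ f : Set (List (GlueAdd V)) → Set (List (Tile Dir × V)),
      ∀ (X : Set (Sym2 V)) (Y Z : Set V),
        IsCutSet G X Y Z → 𝒯.seed.dom ⊆ Y →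
        PolicySet G 𝒯 Z = f (DiploSet G 𝒯 X) := by
  refine ⟨fun M => {p | ∃ X' Y' Z', IsCutSet G X' Y' Z' ∧ 𝒯.seed.dom ⊆ Y' ∧
    DiploSet G 𝒯 X' = M ∧ p ∈ PolicySet G 𝒯 Z'}, fun X Y Z hcut hseed => ?_⟩
  ext p
  constructor
  · exact fun hp => ⟨X, Y, Z, hcut, hseed, rfl, hp⟩
  · rintro ⟨X', Y', Z', hcut', hseed', hD, hp⟩
    rwa [policySet_eq_of_diploSet_eq hcut hcut' hseed hseed' hD.symm hWF.1]

end ATAM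
end

section
/- Projection of injective cutspace assembly sequences: consider the cutspace with parameter s and the projection π(x,y,l) = (x,y). Let 𝒰' = (U, q, τ) be a tile assembly system on the cutspace whose seed q has π injective on its domain. If v is an assembly sequence of 𝒰' in the cutspace whose resulting production p satisfies that π is injective on dom p, then the projected sequence obtained by replacing each attachment t@z of v by t@π(z) is a valid assembly sequence of the tile assembly system (U, π(q), τ) on ℤ², where π(q) is the assembly placing q(z) at π(z) for each z ∈ dom q; its production is the projected assembly π(p). -/
namespace ATAM

/-- Opposite directions in the plane. -/
def Dir.opp2 : Dir → Dir
  | .N => .S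
  | .E => .W
  | .S => .N
  | .W => .E

/-- Unit vector of a direction. -/
def dvec : Dir → ℤ × ℤ
  | .N => (0, 1)
  | .E => (1, 0)
  | .S => (0, -1)
  | .W => (-1, 0)

/-- The square grid of the plane, as a space graph. -/
def Z2 : SpaceGraph Dir (ℤ × ℤ) where
  opp := Dir.opp2
  nbr d v := v + dvec d
  opp_opp d := by cases d <;> rfl
  nbr_opp d v := by
    cases d <;>
      simp only [Dir.opp2, dvec, Prod.ext_iff, Prod.fst_add, Prod.snd_add] <;>
      constructor <;> ring

end ATAM

namespace ATAM

/-- Neighbour function of the cutspace with parameter `s`: two copies of the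
plane, in which, along the ray `x ≥ 2`, the north/south edges between the rows
`y = 2s` and `y = 2s+1` are exchanged between the two layers. -/
def cutNbr (s : ℕ) (d : Dir) (v : ℤ × ℤ × Bool) : ℤ × ℤ × Bool :=
  match d with
  | .N => if v.2.1 = 2 * (s : ℤ) ∧ 2 ≤ v.1 then (v.1, v.2.1 + 1, !v.2.2)
          else (v.1, v.2.1 + 1, v.2.2)
  | .S => if v.2.1 = 2 * (s : ℤ) + 1 ∧ 2 ≤ v.1 then (v.1, v.2.1 - 1, !v.2.2)
          else (v.1, v.2.1 - 1, v.2.2)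
  | .E => (v.1 + 1, v.2.1, v.2.2)
  | .W => (v.1 - 1, v.2.1, v.2.2)

/-- The cutspace with parameter `s`, as a space graph. -/
def Cutspace (s : ℕ) : SpaceGraph Dir (ℤ × ℤ × Bool) where
  opp := Dir.opp2
  nbr := cutNbr s
  opp_opp d := by cases d <;> rfl
  nbr_opp d v := by
    obtain ⟨x, y, l⟩ := v
    cases d
    case N =>
      cases l <;> simp only [cutNbr, Dir.opp2] <;> split_ifs <;>
        simp_all [Prod.ext_iff, Bool.not_not] <;> omega
    case S =>
      cases l <;> simp only [cutNbr, Dir.opp2] <;> split_ifs <;>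
        simp_all [Prod.ext_iff, Bool.not_not] <;> omega
    case E => simp [cutNbr, Dir.opp2]
    case W => simp [cutNbr, Dir.opp2]

/-- Projection of the cutspace onto the plane. -/
def cutProj (v : ℤ × ℤ × Bool) : ℤ × ℤ := (v.1, v.2.1)

/-- The embedding `ε` of the plane into the cutspace: positions `(x, y)` with
`x ≥ 2` and `y ≥ 2` go to layer `1` (here `true`), all others to layer `0`. -/
def embedCut (v : ℤ × ℤ) : ℤ × ℤ × Bool :=
  (v.1, v.2, decide (2 ≤ v.1 ∧ 2 ≤ v.2))

open Classical in
noncomputable def pushAsm {D V V' : Type} (φ : V → V') (σ : Assembly D V) : Assembly D V' :=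
  fun w => if h : ∃ v, φ v = w then σ h.choose else none

/-- Projection of a cutspace assembly onto the plane (layer 0 taking precedence). -/
def projAsm {D : Type} (α : Assembly D (ℤ × ℤ × Bool)) : Assembly D (ℤ × ℤ) :=
  fun w =>
    match α (w.1, w.2, false) with
    | some t => some t
    | none => α (w.1, w.2, true)

/-- A sequence of attachments in the cutspace is consistent if it never touches
both preimages of the same planar position. -/
def Consistent (u : List (Tile Dir × (ℤ × ℤ × Bool))) : Prop :=
  ∀ a ∈ u, ∀ b ∈ u, cutProj a.2 = cutProj b.2 → a.2 = b.2

/-- `Π(u)`: the projected subsequence of first occurrences of the projections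
of the positions of `u` (the second argument accumulates the already-seen
planar positions). -/
def projFirst : List (Tile Dir × (ℤ × ℤ × Bool)) → List (ℤ × ℤ) → List (Tile Dir × (ℤ × ℤ))
  | [], _ => []
  | a :: l, seen =>
    if cutProj a.2 ∈ seen then projFirst l seen
    else (a.1, cutProj a.2) :: projFirst l (cutProj a.2 :: seen)

end ATAM

/-! Attachments only ever add tiles, so injectivity of `π` on the final production gives
injectivity on every intermediate assembly. As long as `π` is injective on the current
assembly `α`, every tile of `α` reappears at its projection in `π(α)`, and the cutspace
neighbour of `z` in direction `d` projects to the planar neighbour of `π(z)` in direction `d`;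
hence each glue that binds `t@z` in the cutspace also binds `t@π(z)` in the plane, and
`π(α + t@z) = π(α) + t@π(z)`. -/

namespace ATAM

section Domain

variable {D V : Type} [DecidableEq V]

theorem dom_attach (α : Assembly D V) (t : Tile D) (z : V) :
    (attach α t z).dom = insert z α.dom := by
  ext w
  rcases eq_or_ne w z with rfl | hw
  · simp [Assembly.dom, attach]
  · simp [Assembly.dom, attach, hw]

theorem dom_subset_dom_resultOf (α : Assembly D V) (l : List (Tile D × V)) :
    α.dom ⊆ (resultOf α l).dom := by
  induction l generalizing α with
  | nil => exact subset_rfl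
  | cons a l ih =>
    calc α.dom ⊆ (attach α a.1 a.2).dom := dom_attach α a.1 a.2 ▸ Set.subset_insert _ _
      _ ⊆ (resultOf α (a :: l)).dom := ih _

end Domain

theorem cutProj_cutNbr (s : ℕ) (d : Dir) (z : ℤ × ℤ × Bool) :
    cutProj (cutNbr s d z) = Z2.nbr d (cutProj z) := by
  cases d <;> simp only [cutNbr, cutProj, Z2, dvec] <;> (try split_ifs) <;>
    simp [Prod.ext_iff] <;> ring

section Projection

variable {D : Type}

theorem projAsm_apply_of_injOn {α : Assembly D (ℤ × ℤ × Bool)}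
    (hα : Set.InjOn cutProj α.dom) {z : ℤ × ℤ × Bool} {t : Tile D} (hz : α z = some t) :
    projAsm α (cutProj z) = some t := by
  obtain ⟨x, y, b⟩ := z
  cases b
  · simp [projAsm, cutProj, hz]
  · have hfalse : α (x, y, false) = none := by
      by_contra h
      have := hα h (show (x, y, true) ∈ α.dom by simp [Assembly.dom, hz]) rfl
      simp at this
    simp [projAsm, cutProj, hfalse, hz]

theorem projAsm_eq_none_iff {α : Assembly D (ℤ × ℤ × Bool)} {w : ℤ × ℤ} :
    projAsm α w = none ↔ ∀ z, cutProj z = w → α z = none := by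
  obtain ⟨x, y⟩ := w
  constructor
  · rintro h ⟨x', y', b⟩ hz
    obtain ⟨rfl, rfl⟩ : x' = x ∧ y' = y := by simpa [cutProj] using hz
    cases hf : α (x', y', false) <;> cases b <;> simp_all [projAsm]
  · intro h
    simp [projAsm, h (x, y, false) rfl, h (x, y, true) rfl]

theorem projAsm_attach {α : Assembly D (ℤ × ℤ × Bool)} {t : Tile D} {z : ℤ × ℤ × Bool}
    (h : Set.InjOn cutProj (attach α t z).dom) :
    projAsm (attach α t z) = attach (projAsm α) t (cutProj z) := by
  funext w
  rcases eq_or_ne w (cutProj z) with rfl | hw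
  · rw [projAsm_apply_of_injOn (t := t) h (by simp [attach])]
    simp [attach]
  · have hfiber : ∀ b, (w.1, w.2, b) ≠ z := by
      rintro b rfl
      exact hw rfl
    simp [projAsm, attach, Function.update_of_ne (hfiber _), Function.update_of_ne hw]

theorem resultOf_projAsm {α : Assembly D (ℤ × ℤ × Bool)} {v : List (Tile D × (ℤ × ℤ × Bool))}
    (h : Set.InjOn cutProj (resultOf α v).dom) :
    resultOf (projAsm α) (v.map fun a => (a.1, cutProj a.2)) = projAsm (resultOf α v) := by
  induction v generalizing α with
  | nil => rfl
  | cons a l ih =>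
    have ha : Set.InjOn cutProj (attach α a.1 a.2).dom :=
      h.mono (dom_subset_dom_resultOf _ l)
    simp only [List.map_cons, resultOf, ← projAsm_attach ha]
    exact ih h

end Projection

theorem attachStrength_le_projAsm (s : ℕ) {α : Assembly Dir (ℤ × ℤ × Bool)}
    (hα : Set.InjOn cutProj α.dom) (t : Tile Dir) (z : ℤ × ℤ × Bool) :
    attachStrength (Cutspace s) α t z ≤ attachStrength Z2 (projAsm α) t (cutProj z) := by
  refine Finset.sum_le_sum fun d _ => ?_
  unfold sideStrength
  cases hn : α ((Cutspace s).nbr d z) with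
  | none => exact Nat.zero_le _
  | some t' =>
    have : projAsm α (Z2.nbr d (cutProj z)) = some t' := by
      rw [← cutProj_cutNbr s d z]
      exact projAsm_apply_of_injOn hα hn
    rw [this]
    rfl

theorem CanAttach.projAsm {s : ℕ} {U : Finset (Tile Dir)} {q : Assembly Dir (ℤ × ℤ × Bool)}
    {q' : Assembly Dir (ℤ × ℤ)} {τ : ℕ} {α : Assembly Dir (ℤ × ℤ × Bool)} {t : Tile Dir}
    {z : ℤ × ℤ × Bool} (h : CanAttach (Cutspace s) ⟨U, q, τ⟩ α t z)
    (hinj : Set.InjOn cutProj (attach α t z).dom) :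
    CanAttach Z2 ⟨U, q', τ⟩ (projAsm α) t (cutProj z) := by
  obtain ⟨htU, hz, hτ⟩ := h
  have hα : Set.InjOn cutProj α.dom := hinj.mono (dom_attach α t z ▸ Set.subset_insert _ _)
  have hfiber : ∀ w, cutProj w = cutProj z → α w = none := by
    intro w hw
    by_contra hne
    have hwz := hinj (dom_attach α t z ▸ Or.inr hne) (by simp [dom_attach]) hw
    exact hne (hwz ▸ hz)
  exact ⟨htU, projAsm_eq_none_iff.mpr hfiber, hτ.trans (attachStrength_le_projAsm s hα t z)⟩

theorem IsSeqFrom.projAsm {s : ℕ} {U : Finset (Tile Dir)} {q : Assembly Dir (ℤ × ℤ × Bool)}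
    {q' : Assembly Dir (ℤ × ℤ)} {τ : ℕ} {α : Assembly Dir (ℤ × ℤ × Bool)}
    {v : List (Tile Dir × (ℤ × ℤ × Bool))} (hv : IsSeqFrom (Cutspace s) ⟨U, q, τ⟩ α v)
    (h : Set.InjOn cutProj (resultOf α v).dom) :
    IsSeqFrom Z2 ⟨U, q', τ⟩ (projAsm α) (v.map fun a => (a.1, cutProj a.2)) := by
  induction v generalizing α with
  | nil => trivial
  | cons a l ih =>
    obtain ⟨hcan, hrest⟩ := hv
    have ha : Set.InjOn cutProj (attach α a.1 a.2).dom :=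
      h.mono (dom_subset_dom_resultOf _ l)
    refine ⟨hcan.projAsm ha, ?_⟩
    rw [← projAsm_attach ha]
    exact ih hrest h

theorem projection_of_injective_sequences_general (s : ℕ) (U : Finset (Tile Dir))
    (q : Assembly Dir (ℤ × ℤ × Bool)) (τ : ℕ)
    (v : List (Tile Dir × (ℤ × ℤ × Bool)))
    (hv : IsSeqFrom (Cutspace s) ⟨U, q, τ⟩ q v)
    (hp : Set.InjOn cutProj (resultOf q v).dom) :
    IsSeqFrom Z2 (⟨U, projAsm q, τ⟩ : TAS Dir (ℤ × ℤ)) (projAsm q)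
      (v.map fun a => (a.1, cutProj a.2)) ∧
    resultOf (projAsm q) (v.map fun a => (a.1, cutProj a.2)) = projAsm (resultOf q v) :=
  ⟨hv.projAsm hp, resultOf_projAsm hp⟩

theorem projection_of_injective_sequences (s : ℕ) (U : Finset (Tile Dir))
    (q : Assembly Dir (ℤ × ℤ × Bool)) (τ : ℕ)
    (hq : Set.InjOn cutProj q.dom)
    (v : List (Tile Dir × (ℤ × ℤ × Bool)))
    (hv : IsSeqFrom (Cutspace s) ⟨U, q, τ⟩ q v)
    (hp : Set.InjOn cutProj (resultOf q v).dom) :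
    IsSeqFrom Z2 (⟨U, projAsm q, τ⟩ : TAS Dir (ℤ × ℤ)) (projAsm q)
      (v.map fun a => (a.1, cutProj a.2)) ∧
    resultOf (projAsm q) (v.map fun a => (a.1, cutProj a.2)) = projAsm (resultOf q v) :=
  projection_of_injective_sequences_general s U q τ v hv hp

end ATAM
end
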